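/- Let E be an effect algebra whose induced order satisfies the Ascending Chain Condition, and define the set-valued natural implication a→b := {b+m : m ∈ Max L(a',b')}. Then for all a,b ∈ E with b ≤ a: a→b = {a'+b} and a→b = b'→a'. -/
import Mathlib


/-- An effect algebra `(E,+,',0,1)`.  The partial addition is encoded by a total
function `add` together with a definedness predicate `D`; the axioms only
constrain `add` on defined pairs. -/
structure EffectAlgebra (E : Type*) where
  /-- definedness predicate for the partial addition -/
  D : E → E → Prop
  /-- the (partial) addition -/
  add : E → E → E
  /-- the complementation `x ↦ x'` -/
  compl : E → E
  zero : E
  one : E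
  /-- (E1) -/
  comm_def : ∀ {a b : E}, D a b → D b a
  comm : ∀ {a b : E}, D a b → add a b = add b a
  /-- (E2): `(a+b)+c` is defined iff `a+(b+c)` is defined -/
  assoc_def : ∀ a b c : E, (D a b ∧ D (add a b) c) ↔ (D b c ∧ D a (add b c))
  assoc : ∀ a b c : E, D a b → D (add a b) c → add (add a b) c = add a (add b c)
  /-- (E3): `a + b` is defined and equals `1` iff `b = a'` -/
  orth : ∀ a b : E, (D a b ∧ add a b = one) ↔ b = compl a
  /-- (E4) -/
  one_add : ∀ a : E, D one a → a = zero

/-- The induced order of an effect algebra: `a ≤ b` iff `a + c = b` for some `c`. -/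
def EffectAlgebra.le {E : Type*} (A : EffectAlgebra E) (a b : E) : Prop :=
  ∃ c, A.D a c ∧ A.add a c = b

/-- The lower cone `L(a,b) = {x : x ≤ a and x ≤ b}` (w.r.t. the induced order). -/
def EffectAlgebra.lowerCone {E : Type*} (A : EffectAlgebra E) (a b : E) : Set E :=
  {x | A.le x a ∧ A.le x b}

/-- `Max S`: the set of maximal elements of `S` w.r.t. the induced order. -/
def EffectAlgebra.maxOf {E : Type*} (A : EffectAlgebra E) (S : Set E) : Set E :=
  {x | x ∈ S ∧ ∀ y ∈ S, A.le x y → x = y}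

/-- The induced order satisfies the Ascending Chain Condition: there is no
infinite strictly ascending chain. -/
def EffectAlgebra.ACC {E : Type*} (A : EffectAlgebra E) : Prop :=
  ¬ ∃ f : ℕ → E, ∀ n : ℕ, A.le (f n) (f (n + 1)) ∧ f n ≠ f (n + 1)

/-- The set-valued natural implication `a → b := {b + m : m ∈ Max L(a',b')}`
(each such sum is defined since `m ≤ b'`). -/
def EffectAlgebra.impSet {E : Type*} (A : EffectAlgebra E) (a b : E) : Set E :=
  (fun m => A.add b m) '' A.maxOf (A.lowerCone (A.compl a) (A.compl b))


namespace EffectAlgebra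

variable {E : Type*} (A : EffectAlgebra E)

lemma orth_self (a : E) : A.D a (A.compl a) ∧ A.add a (A.compl a) = A.one :=
  (A.orth a (A.compl a)).mpr rfl

lemma compl_compl (a : E) : A.compl (A.compl a) = a := by
  have h := A.orth_self a
  exact ((A.orth (A.compl a) a).mp ⟨A.comm_def h.1, (A.comm h.1).symm.trans h.2⟩).symm

lemma one_compl : A.compl A.one = A.zero :=
  A.one_add _ (A.orth_self A.one).1

lemma D_one_zero : A.D A.one A.zero := by
  have := (A.orth_self A.one).1
  rwa [A.one_compl] at this

lemma one_add_zero : A.add A.one A.zero = A.one := by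
  have := (A.orth_self A.one).2
  rwa [A.one_compl] at this

lemma add_zero (a : E) : A.D a A.zero ∧ A.add a A.zero = a := by
  have key : ∀ x : E, A.D (A.compl x) A.zero ∧ A.add (A.compl x) A.zero = A.compl x := by
    intro x
    have h1 := A.orth_self x
    have hD1 : A.D (A.add x (A.compl x)) A.zero := by rw [h1.2]; exact A.D_one_zero
    have h2 := (A.assoc_def x (A.compl x) A.zero).mp ⟨h1.1, hD1⟩
    have h3 : A.add x (A.add (A.compl x) A.zero) = A.one := by
      rw [← A.assoc x (A.compl x) A.zero h1.1 hD1, h1.2, A.one_add_zero]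
    exact ⟨h2.1, (A.orth x _).mp ⟨h2.2, h3⟩⟩
  have := key (A.compl a)
  rwa [A.compl_compl] at this

lemma le_refl (a : E) : A.le a a :=
  ⟨A.zero, (A.add_zero a).1, (A.add_zero a).2⟩

lemma eq_zero_of_add_eq_zero {c d : E} (hD : A.D c d) (h : A.add c d = A.zero) :
    c = A.zero ∧ d = A.zero := by
  have h0 : A.compl A.zero = A.one := by
    rw [← A.one_compl, A.compl_compl]
  have hc1 : A.compl (A.add c d) = A.one := by rw [h, h0]
  have hD1 : A.D (A.add c d) A.one := by
    rw [← hc1]; exact (A.orth_self (A.add c d)).1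
  have h2 := (A.assoc_def c d A.one).mp ⟨hD, hD1⟩
  have hd : d = A.zero := A.one_add d (A.comm_def h2.1)
  refine ⟨?_, hd⟩
  have hc : c = A.add c d := by rw [hd, (A.add_zero c).2]
  exact hc.trans h

lemma cancel {a b c : E} (hab : A.D a b) (hac : A.D a c)
    (h : A.add a b = A.add a c) : b = c := by
  have key : ∀ {x : E}, A.D a x → x = A.compl (A.add a (A.compl (A.add a x))) := by
    intro x hx
    have h1 := A.orth_self (A.add a x)
    have h2 := (A.assoc_def a x (A.compl (A.add a x))).mp ⟨hx, h1.1⟩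
    have h3 : A.add x (A.compl (A.add a x)) = A.compl a := by
      apply (A.orth a _).mp
      refine ⟨h2.2, ?_⟩
      rw [← A.assoc a x (A.compl (A.add a x)) hx h1.1]
      exact h1.2
    have h4 : A.D (A.compl (A.add a x)) x ∧ A.D a (A.add (A.compl (A.add a x)) x) := by
      refine ⟨A.comm_def h2.1, ?_⟩
      rw [A.comm (A.comm_def h2.1), h3]
      exact (A.orth_self a).1
    have h5 := (A.assoc_def a (A.compl (A.add a x)) x).mpr h4
    apply (A.orth (A.add a (A.compl (A.add a x))) x).mp
    refine ⟨h5.2, ?_⟩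
    rw [A.assoc a (A.compl (A.add a x)) x h5.1 h5.2, A.comm (A.comm_def h2.1), h3]
    exact (A.orth_self a).2
  have hb := key hab
  have hc := key hac
  rw [hb, h, ← key hac]

lemma le_antisymm {a b : E} (h1 : A.le a b) (h2 : A.le b a) : a = b := by
  obtain ⟨c, hc, hac⟩ := h1
  obtain ⟨d, hd, hbd⟩ := h2
  have hD2 : A.D (A.add a c) d := by rw [hac]; exact hd
  have haux := (A.assoc_def a c d).mp ⟨hc, hD2⟩
  have hsum : A.add a (A.add c d) = a := by
    rw [← A.assoc a c d hc hD2, hac, hbd]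
  have hcd0 : A.add c d = A.zero := by
    apply A.cancel haux.2 (A.add_zero a).1
    rw [hsum, (A.add_zero a).2]
  have hz := A.eq_zero_of_add_eq_zero haux.1 hcd0
  rw [← hac, hz.1, (A.add_zero a).2]

lemma D_of_le {x y z : E} (hxy : A.D x y) (hz : A.le z y) : A.D x z := by
  obtain ⟨d, hd, hzd⟩ := hz
  exact ((A.assoc_def x z d).mpr ⟨hd, by rwa [hzd]⟩).1

lemma compl_le_compl {a b : E} (h : A.le b a) :
    A.le (A.compl a) (A.compl b) ∧ A.D (A.compl a) b := by
  obtain ⟨c, hc, hbc⟩ := h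
  have h1 := A.orth_self a
  have hD1 : A.D (A.add b c) (A.compl a) := by rw [hbc]; exact h1.1
  have h2 := (A.assoc_def b c (A.compl a)).mp ⟨hc, hD1⟩
  have h3 : A.add c (A.compl a) = A.compl b := by
    apply (A.orth b _).mp
    refine ⟨h2.2, ?_⟩
    rw [← A.assoc b c (A.compl a) hc hD1, hbc]
    exact h1.2
  have hDa'c : A.D (A.compl a) c := A.comm_def h2.1
  have hle : A.le (A.compl a) (A.compl b) :=
    ⟨c, hDa'c, by rw [A.comm hDa'c]; exact h3⟩
  have hDb'b : A.D (A.compl b) b := by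
    have := (A.orth_self (A.compl b)).1
    rwa [A.compl_compl] at this
  have h4 : A.D (A.add (A.compl a) c) b := by
    rw [A.comm hDa'c, h3]; exact hDb'b
  have h5 := (A.assoc_def (A.compl a) c b).mp ⟨hDa'c, h4⟩
  exact ⟨hle, A.D_of_le h5.2 ⟨c, hc, A.comm hc⟩⟩

lemma maxOf_lowerCone {u v : E} (huv : A.le u v) :
    A.maxOf (A.lowerCone u v) = {u} := by
  ext x
  simp only [Set.mem_singleton_iff, maxOf, lowerCone, Set.mem_setOf_eq]
  constructor
  · rintro ⟨⟨hxu, _⟩, hmax⟩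
    exact hmax u ⟨A.le_refl u, huv⟩ hxu
  · rintro rfl
    exact ⟨⟨A.le_refl x, huv⟩, fun y hy hxy => A.le_antisymm hxy hy.1⟩

end EffectAlgebra

/-- Theorem 5.2 (iii),(iv): in an effect algebra satisfying the ACC, if `b ≤ a` then
`a → b = {a' + b}` (this sum being defined) and `a → b = b' → a'`. -/
theorem impSet_of_ge {E : Type*} (A : EffectAlgebra E) (hacc : A.ACC) (a b : E)
    (h : A.le b a) :
    A.D (A.compl a) b ∧
    A.impSet a b = {A.add (A.compl a) b} ∧
    A.impSet a b = A.impSet (A.compl b) (A.compl a) := by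
  obtain ⟨hle, hD⟩ := A.compl_le_compl h
  refine ⟨hD, ?_, ?_⟩
  · simp only [EffectAlgebra.impSet, A.maxOf_lowerCone hle, Set.image_singleton,
      A.comm (A.comm_def hD)]
  · simp only [EffectAlgebra.impSet, A.maxOf_lowerCone hle, A.compl_compl,
      A.maxOf_lowerCone h, Set.image_singleton, A.comm (A.comm_def hD)]
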